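/- arXiv:1710.05110 — 4 statements merged into one kernel-verified Lean document; each statement's English description precedes it below -/
import Mathlib

section
/- Let X ∈ R^{d×n}, λ > 0, S ⊆ {1..n} of size s, and define h_i = 1 − x_i^T (X_S X_S^T + λI)^{-1} x_i for i ∈ S. Then the sum M = Σ_{i∈S} h_i equals s − d + λ·tr((X_S X_S^T + λI)^{-1}), and consequently M ≥ s − d_λ where d_λ = tr(X^T (X X^T + λI)^{-1} X) is the statistical dimension of the full matrix X. -/
open Matrix

/-- The regularized Gram matrix `X_S X_Sᵀ + λ I = ∑_{i∈S} x_i x_iᵀ + λ I`. -/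
noncomputable def regGram {d n : ℕ} (X : Matrix (Fin d) (Fin n) ℝ) (lam : ℝ)
    (S : Finset (Fin n)) : Matrix (Fin d) (Fin d) ℝ :=
  ∑ i ∈ S, Matrix.vecMulVec (fun k => X k i) (fun k => X k i) + lam • 1

/-- The statistical dimension `d_λ = tr(Xᵀ (X Xᵀ + λI)⁻¹ X)`. -/
noncomputable def statDim {d n : ℕ} (X : Matrix (Fin d) (Fin n) ℝ) (lam : ℝ) : ℝ :=
  (Xᵀ * (X * Xᵀ + lam • 1)⁻¹ * X).trace

/-!
With `A = X_S X_Sᵀ + λI`, the sum `∑_{i∈S} x_iᵀ A⁻¹ x_i` is `tr (A⁻¹ (A - λI)) = d - λ tr A⁻¹`,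
and cycling the trace gives `d_λ = d - λ tr B⁻¹` for `B = X Xᵀ + λI`. Since `A ≤ B` in the
Loewner order, `B⁻¹ ≤ A⁻¹`: evaluate the variational bound `2 wᵀv - wᵀAw ≤ vᵀA⁻¹v`
at `w = B⁻¹v`, where the left side is at least `2 wᵀv - wᵀBw = vᵀB⁻¹v`.
-/

open scoped MatrixOrder

namespace Matrix

variable {ι : Type*} [Fintype ι]

theorem dotProduct_mulVec_self_eq_trace {R : Type*} [CommSemiring R] (M : Matrix ι ι R)
    (v : ι → R) : v ⬝ᵥ M *ᵥ v = (M * vecMulVec v v).trace := by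
  rw [mul_vecMulVec, trace_vecMulVec, dotProduct_comm]

variable [DecidableEq ι]

theorem trace_inv_mul_sub_smul_one {R : Type*} [CommRing R] {A : Matrix ι ι R}
    (hA : IsUnit A.det) (c : R) :
    (A⁻¹ * (A - c • 1)).trace = Fintype.card ι - c * A⁻¹.trace := by
  rw [Matrix.mul_sub, nonsing_inv_mul _ hA, Matrix.mul_smul, Matrix.mul_one, trace_sub,
    trace_smul, trace_one, smul_eq_mul]

theorem PosDef.two_mul_dotProduct_sub_le {A : Matrix ι ι ℝ} (hA : A.PosDef) (v w : ι → ℝ) :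
    2 * (w ⬝ᵥ v) - w ⬝ᵥ A *ᵥ w ≤ v ⬝ᵥ A⁻¹ *ᵥ v := by
  have hsymm : Aᵀ = A := (isHermitian_iff_isSymm.mp hA.isHermitian).eq
  have hAA : A *ᵥ (A⁻¹ *ᵥ v) = v := by
    rw [mulVec_mulVec, mul_nonsing_inv _ ((isUnit_iff_isUnit_det A).mp hA.isUnit), one_mulVec]
  have h := hA.posSemidef.dotProduct_mulVec_nonneg (A⁻¹ *ᵥ v - w)
  rw [star_trivial, mulVec_sub, hAA, dotProduct_sub, sub_dotProduct, sub_dotProduct,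
    dotProduct_mulVec (A⁻¹ *ᵥ v), ← mulVec_transpose, hsymm, hAA,
    dotProduct_comm (A⁻¹ *ᵥ v), dotProduct_comm v w] at h
  linarith

theorem PosDef.inv_le_inv {A B : Matrix ι ι ℝ} (hA : A.PosDef) (hAB : A ≤ B) : B⁻¹ ≤ A⁻¹ := by
  have hB : B.PosDef := by simpa using hA.add_posSemidef (le_iff.mp hAB)
  refine le_iff.mpr <| .of_dotProduct_mulVec_nonneg (hA.inv.isHermitian.sub hB.inv.isHermitian)
    fun v => ?_
  set w := B⁻¹ *ᵥ v with hw
  have hBw : B *ᵥ w = v := by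
    rw [hw, mulVec_mulVec, mul_nonsing_inv _ ((isUnit_iff_isUnit_det B).mp hB.isUnit),
      one_mulVec]
  have hAw : w ⬝ᵥ A *ᵥ w ≤ w ⬝ᵥ B *ᵥ w := by
    simpa [sub_mulVec] using (le_iff.mp hAB).dotProduct_mulVec_nonneg w
  have hvw : v ⬝ᵥ B⁻¹ *ᵥ v = w ⬝ᵥ v := dotProduct_comm _ _
  have hvar := hA.two_mul_dotProduct_sub_le v w
  rw [star_trivial, sub_mulVec, dotProduct_sub, sub_nonneg]
  linarith [hBw ▸ hAw]

end Matrix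

section RegGram

variable {d n : ℕ} (X : Matrix (Fin d) (Fin n) ℝ)

theorem regGram_posDef {lam : ℝ} (hlam : 0 < lam) (S : Finset (Fin n)) : (regGram X lam S).PosDef :=
  (PosDef.smul PosDef.one hlam).posSemidef_add
    (posSemidef_sum S fun i _ => by simpa using posSemidef_vecMulVec_self_star fun k => X k i)

theorem regGram_mono (lam : ℝ) : Monotone (regGram X lam) := by
  intro S T hST
  rw [le_iff, regGram, regGram, add_sub_add_right_eq_sub, ← Finset.sum_sdiff hST,
    add_sub_cancel_right]
  exact posSemidef_sum _ fun i _ => by simpa using posSemidef_vecMulVec_self_star fun k => X k i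

theorem regGram_univ (lam : ℝ) : regGram X lam Finset.univ = X * Xᵀ + lam • 1 := by
  rw [regGram]
  congr 1
  ext k l
  simp [mul_apply, vecMulVec_apply, Matrix.sum_apply]

theorem sum_dotProduct_inv_regGram_mulVec {lam : ℝ} (hlam : 0 < lam) (S : Finset (Fin n)) :
    ∑ i ∈ S, (fun k => X k i) ⬝ᵥ (regGram X lam S)⁻¹ *ᵥ (fun k => X k i)
      = d - lam * ((regGram X lam S)⁻¹).trace := by
  have hdet := (isUnit_iff_isUnit_det _).mp (regGram_posDef X hlam S).isUnit
  calc _ = ((regGram X lam S)⁻¹ * (regGram X lam S - lam • 1)).trace := by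
        rw [regGram, add_sub_cancel_right, Matrix.mul_sum, trace_sum]
        simp only [dotProduct_mulVec_self_eq_trace]
    _ = _ := by rw [trace_inv_mul_sub_smul_one hdet, Fintype.card_fin]

theorem statDim_eq {lam : ℝ} (hlam : 0 < lam) :
    statDim X lam = d - lam * ((regGram X lam Finset.univ)⁻¹).trace := by
  have hdet := (isUnit_iff_isUnit_det _).mp (regGram_posDef X hlam Finset.univ).isUnit
  rw [statDim, ← regGram_univ, trace_mul_cycle, trace_mul_comm,
    eq_sub_of_add_eq (regGram_univ X lam).symm, trace_inv_mul_sub_smul_one hdet,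
    Fintype.card_fin]

end RegGram

/-- `M = ∑_{i∈S} h_i = s − d + λ·tr((X_S X_Sᵀ + λI)⁻¹)`, and consequently `M ≥ s − d_λ`. -/
theorem sum_h_eq_and_ge
    (d n : ℕ) (X : Matrix (Fin d) (Fin n) ℝ) (lam : ℝ) (hlam : 0 < lam)
    (S : Finset (Fin n)) :
    (∑ i ∈ S, (1 - (fun k => X k i) ⬝ᵥ (regGram X lam S)⁻¹ *ᵥ (fun k => X k i)))
        = (S.card : ℝ) - d + lam * ((regGram X lam S)⁻¹).trace
    ∧ (S.card : ℝ) - statDim X lam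
        ≤ ∑ i ∈ S, (1 - (fun k => X k i) ⬝ᵥ (regGram X lam S)⁻¹ *ᵥ (fun k => X k i)) := by
  have hsum : ∑ i ∈ S, (1 - (fun k => X k i) ⬝ᵥ (regGram X lam S)⁻¹ *ᵥ (fun k => X k i))
      = (S.card : ℝ) - d + lam * ((regGram X lam S)⁻¹).trace := by
    rw [Finset.sum_sub_distrib, sum_dotProduct_inv_regGram_mulVec X hlam, Finset.sum_const,
      nsmul_one]
    ring
  refine ⟨hsum, ?_⟩
  have htrace : ((regGram X lam Finset.univ)⁻¹).trace ≤ ((regGram X lam S)⁻¹).trace :=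
    OrderHomClass.mono (tracePositiveLinearMap (Fin d) ℝ ℝ) <|
      (regGram_posDef X hlam S).inv_le_inv (regGram_mono X lam (Finset.subset_univ S))
  rw [hsum, statDim_eq X hlam]
  linarith [mul_le_mul_of_nonneg_left htrace hlam.le]
end

section
/- Fix S ⊆ {1..n}. Under the model y = X^T w* + ξ with E[ξ] = 0, Var[ξ] ⪯ σ²I, and assuming λ ≤ σ²/‖w*‖², the ridge estimator ŵ_S = (X_S X_S^T + λI)^{-1} X_S y_S satisfies E_ξ‖ŵ_S − w*‖² ≤ σ²·tr((X_S X_S^T + λI)^{-1}). -/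
/-!
Write `A = X_S X_Sᵀ + λI` and `B = A⁻¹`. Under the linear model the error is
`ŵ_S - w* = B X_S ξ - λ B w*`, and since `ξ` is centred the cross term vanishes in expectation, so
the risk is at most `σ² tr(B X_S X_Sᵀ B) + λ² ‖B w*‖²`. As `X_S X_Sᵀ = A - λI`, the variance term
is `σ² (tr B - λ tr B²)`, while Cauchy–Schwarz bounds the bias term by
`λ² tr(B²) ‖w*‖² ≤ λ σ² tr B²`, which is exactly the deficit `λ σ² tr B²`.
-/

open Matrix MeasureTheory

/-- The ridge estimator on the subproblem `(X_S, y_S)`: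
`ŵ_S = (X_S X_Sᵀ + λI)⁻¹ X_S y_S = (X_S X_Sᵀ + λI)⁻¹ ∑_{i∈S} y_i x_i`. -/
noncomputable def ridgeEst {d n : ℕ} (X : Matrix (Fin d) (Fin n) ℝ) (lam : ℝ)
    (S : Finset (Fin n)) (y : Fin n → ℝ) : Fin d → ℝ :=
  (regGram X lam S)⁻¹ *ᵥ (∑ i ∈ S, y i • (fun k => X k i))

section RidgeAlgebra

variable {m n : Type*} [Fintype n]

theorem posDef_mul_transpose_add_smul_one [Fintype m] [DecidableEq m] (M : Matrix m n ℝ)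
    {lam : ℝ} (hlam : 0 < lam) :
    (M * Mᵀ + lam • 1).PosDef := by
  simpa using PosDef.posSemidef_add (posSemidef_self_mul_conjTranspose M) (PosDef.one.smul hlam)

theorem transpose_inv_mul_transpose_add_smul_one [Fintype m] [DecidableEq m]
    (M : Matrix m n ℝ) (lam : ℝ) : (M * Mᵀ + lam • 1)⁻¹ᵀ = (M * Mᵀ + lam • 1)⁻¹ := by
  rw [transpose_nonsing_inv]
  simp [transpose_mul]

theorem inv_mulVec_mulVec_transpose_add_sub [Fintype m] [DecidableEq m] {M : Matrix m n ℝ}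
    {lam : ℝ} (hA : IsUnit (M * Mᵀ + lam • 1).det) (w : m → ℝ) (e : n → ℝ) :
    (M * Mᵀ + lam • 1)⁻¹ *ᵥ (M *ᵥ (Mᵀ *ᵥ w + e)) - w
      = ((M * Mᵀ + lam • 1)⁻¹ * M) *ᵥ e - lam • ((M * Mᵀ + lam • 1)⁻¹ *ᵥ w) := by
  set A := M * Mᵀ + lam • 1
  have hMMt : M * Mᵀ = A - lam • 1 := by simp [A]
  rw [mulVec_add, mulVec_mulVec, hMMt, mulVec_add, mulVec_mulVec, ← mulVec_mulVec e,
    Matrix.mul_sub, nonsing_inv_mul A hA, sub_mulVec, one_mulVec, mul_smul_comm, mul_one,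
    smul_mulVec]
  abel

theorem trace_mul_transpose_eq_sum_dotProduct [Fintype m] (C : Matrix m n ℝ) :
    (C * Cᵀ).trace = ∑ k, C k ⬝ᵥ C k := rfl

theorem dotProduct_mulVec_self_le [Fintype m] (B : Matrix m n ℝ) (w : n → ℝ) :
    (B *ᵥ w) ⬝ᵥ (B *ᵥ w) ≤ (B * Bᵀ).trace * (w ⬝ᵥ w) := by
  rw [trace_mul_transpose_eq_sum_dotProduct, Finset.sum_mul]
  refine Finset.sum_le_sum fun k _ => ?_
  simpa [mulVec, dotProduct, sq] using Finset.sum_mul_sq_le_sq_mul_sq Finset.univ (B k) w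

theorem trace_inv_mul_mul_transpose [Fintype m] [DecidableEq m] {M : Matrix m n ℝ} {lam : ℝ}
    (hA : IsUnit (M * Mᵀ + lam • 1).det) :
    ((M * Mᵀ + lam • 1)⁻¹ * M * ((M * Mᵀ + lam • 1)⁻¹ * M)ᵀ).trace
      = (M * Mᵀ + lam • 1)⁻¹.trace
          - lam * ((M * Mᵀ + lam • 1)⁻¹ * (M * Mᵀ + lam • 1)⁻¹).trace := by
  set A := M * Mᵀ + lam • 1
  have hinvT : A⁻¹ᵀ = A⁻¹ := transpose_inv_mul_transpose_add_smul_one M lam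
  have hMMt : M * Mᵀ = A - lam • 1 := by simp [A]
  rw [transpose_mul, hinvT, Matrix.mul_assoc, ← Matrix.mul_assoc M, hMMt, Matrix.sub_mul,
    mul_nonsing_inv A hA, Matrix.mul_sub, Matrix.mul_one, smul_mul_assoc, Matrix.one_mul,
    Matrix.mul_smul, trace_sub, trace_smul, smul_eq_mul]

theorem ridge_variance_add_bias_le [Fintype m] [DecidableEq m] (M : Matrix m n ℝ) (w : m → ℝ)
    {lam σ : ℝ} (hlam : 0 < lam) (hreg : lam * (w ⬝ᵥ w) ≤ σ ^ 2) :
    σ ^ 2 * ((M * Mᵀ + lam • 1)⁻¹ * M * ((M * Mᵀ + lam • 1)⁻¹ * M)ᵀ).trace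
        + lam ^ 2 * ((M * Mᵀ + lam • 1)⁻¹ *ᵥ w ⬝ᵥ (M * Mᵀ + lam • 1)⁻¹ *ᵥ w)
      ≤ σ ^ 2 * (M * Mᵀ + lam • 1)⁻¹.trace := by
  set A := M * Mᵀ + lam • 1
  have hA : IsUnit A.det := (posDef_mul_transpose_add_smul_one M hlam).det_pos.ne'.isUnit
  have hinvT : A⁻¹ᵀ = A⁻¹ := transpose_inv_mul_transpose_add_smul_one M lam
  have hbias := dotProduct_mulVec_self_le A⁻¹ w
  rw [hinvT] at hbias
  have htr : 0 ≤ (A⁻¹ * A⁻¹).trace := by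
    simpa [hinvT] using (posSemidef_self_mul_conjTranspose A⁻¹).trace_nonneg
  rw [trace_inv_mul_mul_transpose hA]
  nlinarith [mul_le_mul_of_nonneg_left hbias (sq_nonneg lam),
    mul_le_mul_of_nonneg_right hreg (mul_nonneg hlam.le htr)]

end RidgeAlgebra

section NoiseMoments

variable {Ω ι : Type*} [Fintype ι] [MeasurableSpace Ω] {μ : Measure Ω} {ξ : Ω → ι → ℝ}

theorem integrable_dotProduct (hint : ∀ i, Integrable (fun ω => ξ ω i) μ) (a : ι → ℝ) :
    Integrable (fun ω => ξ ω ⬝ᵥ a) μ :=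
  integrable_finsetSum _ fun i _ => (hint i).mul_const _

theorem integral_dotProduct_eq_zero (hint : ∀ i, Integrable (fun ω => ξ ω i) μ)
    (hmean : ∀ i, ∫ ω, ξ ω i ∂μ = 0) (a : ι → ℝ) :
    ∫ ω, ξ ω ⬝ᵥ a ∂μ = 0 := by
  simp only [dotProduct]
  rw [integral_finsetSum _ fun i _ => (hint i).mul_const _]
  simp [integral_mul_const, hmean]

theorem integrable_dotProduct_sq (hint2 : ∀ i j, Integrable (fun ω => ξ ω i * ξ ω j) μ)
    (a : ι → ℝ) : Integrable (fun ω => (ξ ω ⬝ᵥ a) ^ 2) μ := by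
  have hexpand : (fun ω => (ξ ω ⬝ᵥ a) ^ 2)
      = fun ω => ∑ i, ∑ j, a i * a j * (ξ ω i * ξ ω j) := by
    funext ω
    rw [sq, dotProduct, Finset.sum_mul_sum]
    exact Finset.sum_congr rfl fun i _ => Finset.sum_congr rfl fun j _ => by ring
  rw [hexpand]
  exact integrable_finsetSum _ fun i _ => integrable_finsetSum _ fun j _ =>
    (hint2 i j).const_mul _

theorem integrable_dotProduct_sub_sq [IsFiniteMeasure μ]
    (hint : ∀ i, Integrable (fun ω => ξ ω i) μ)
    (hint2 : ∀ i j, Integrable (fun ω => ξ ω i * ξ ω j) μ) (a : ι → ℝ) (c : ℝ) :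
    Integrable (fun ω => (ξ ω ⬝ᵥ a - c) ^ 2) μ := by
  simp only [sub_sq]
  exact ((integrable_dotProduct_sq hint2 a).sub
    (((integrable_dotProduct hint a).const_mul 2).mul_const c)).add (integrable_const _)

theorem integral_dotProduct_sub_sq [IsProbabilityMeasure μ]
    (hint : ∀ i, Integrable (fun ω => ξ ω i) μ)
    (hint2 : ∀ i j, Integrable (fun ω => ξ ω i * ξ ω j) μ)
    (hmean : ∀ i, ∫ ω, ξ ω i ∂μ = 0) (a : ι → ℝ) (c : ℝ) :
    ∫ ω, (ξ ω ⬝ᵥ a - c) ^ 2 ∂μ = ∫ ω, (ξ ω ⬝ᵥ a) ^ 2 ∂μ + c ^ 2 := by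
  simp only [sub_sq]
  rw [integral_add _ (integrable_const _), integral_sub (integrable_dotProduct_sq hint2 a),
    integral_mul_const, integral_const_mul, integral_dotProduct_eq_zero hint hmean]
  · simp
  · exact ((integrable_dotProduct hint a).const_mul 2).mul_const c
  · exact (integrable_dotProduct_sq hint2 a).sub
      (((integrable_dotProduct hint a).const_mul 2).mul_const c)

end NoiseMoments

/-- The paper's `X_S`, with the columns outside `S` set to zero instead of removed, so that it
keeps the index type of `X`. -/
def restrictCols {m n R : Type*} [DecidableEq n] [Zero R] (X : Matrix m n R) (S : Finset n) :
    Matrix m n R :=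
  of fun k i => if i ∈ S then X k i else 0

section ColumnRestriction

variable {m n R : Type*} [Fintype n] [DecidableEq n] [CommSemiring R]
  (X : Matrix m n R) (S : Finset n)

theorem sum_vecMulVec_col_eq_restrictCols_mul_transpose :
    ∑ i ∈ S, vecMulVec (fun k => X k i) (fun k => X k i)
      = restrictCols X S * (restrictCols X S)ᵀ := by
  ext a b
  simp [restrictCols, mul_apply, vecMulVec_apply, Matrix.sum_apply, Finset.sum_ite_mem]

theorem sum_smul_col_eq_restrictCols_mulVec (y : n → R) :
    ∑ i ∈ S, y i • (fun k => X k i) = restrictCols X S *ᵥ y := by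
  ext a
  simp [restrictCols, mulVec, dotProduct, Finset.sum_ite_mem, mul_comm]

theorem restrictCols_mul_transpose :
    restrictCols X S * Xᵀ = restrictCols X S * (restrictCols X S)ᵀ := by
  ext a b
  simp [restrictCols, mul_apply]

end ColumnRestriction

theorem regGram_eq {d n : ℕ} (X : Matrix (Fin d) (Fin n) ℝ) (lam : ℝ) (S : Finset (Fin n)) :
    regGram X lam S = restrictCols X S * (restrictCols X S)ᵀ + lam • 1 := by
  rw [regGram, sum_vecMulVec_col_eq_restrictCols_mul_transpose]

theorem ridgeEst_linearModel_sub {d n : ℕ} (X : Matrix (Fin d) (Fin n) ℝ) {lam : ℝ}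
    (hlam : 0 < lam) (S : Finset (Fin n)) (w : Fin d → ℝ) (e : Fin n → ℝ) :
    ridgeEst X lam S (Xᵀ *ᵥ w + e) - w
      = ((regGram X lam S)⁻¹ * restrictCols X S) *ᵥ e - lam • ((regGram X lam S)⁻¹ *ᵥ w) := by
  have hunit := (posDef_mul_transpose_add_smul_one (restrictCols X S) hlam).det_pos.ne'.isUnit
  rw [ridgeEst, sum_smul_col_eq_restrictCols_mulVec, mulVec_add, mulVec_mulVec,
    restrictCols_mul_transpose, ← mulVec_mulVec, ← mulVec_add, regGram_eq]
  exact inv_mulVec_mulVec_transpose_add_sub hunit w e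

/-- MSE bound for fixed `S`: under `y = Xᵀw* + ξ`, `E[ξ]=0`, `Var[ξ] ⪯ σ²I` and
`λ ≤ σ²/‖w*‖²`, we have `E_ξ‖ŵ_S − w*‖² ≤ σ²·tr((X_S X_Sᵀ + λI)⁻¹)`. -/
theorem ridge_mse_fixed_subset
    (d n : ℕ) (X : Matrix (Fin d) (Fin n) ℝ) (w : Fin d → ℝ) (lam σ : ℝ)
    (hlam : 0 < lam) (hreg : lam * (∑ k, w k ^ 2) ≤ σ ^ 2)
    {Ω : Type} [MeasurableSpace Ω] (μ : Measure Ω) [IsProbabilityMeasure μ]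
    (ξ : Ω → Fin n → ℝ)
    (hint : ∀ i, Integrable (fun ω => ξ ω i) μ)
    (hint2 : ∀ i j, Integrable (fun ω => ξ ω i * ξ ω j) μ)
    (hmean : ∀ i, ∫ ω, ξ ω i ∂μ = 0)
    (hvar : ∀ u : Fin n → ℝ, ∫ ω, (ξ ω ⬝ᵥ u) ^ 2 ∂μ ≤ σ ^ 2 * (u ⬝ᵥ u))
    (S : Finset (Fin n)) :
    ∫ ω, (∑ k, (ridgeEst X lam S (fun i => (Xᵀ *ᵥ w) i + ξ ω i) k - w k) ^ 2) ∂μ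
      ≤ σ ^ 2 * ((regGram X lam S)⁻¹).trace := by
  set C := (regGram X lam S)⁻¹ * restrictCols X S
  set b := (regGram X lam S)⁻¹ *ᵥ w
  have herr : ∀ ω k, ridgeEst X lam S (fun i => (Xᵀ *ᵥ w) i + ξ ω i) k - w k
      = ξ ω ⬝ᵥ C k - lam * b k := fun ω k => by
    rw [dotProduct_comm]
    exact congrFun (ridgeEst_linearModel_sub X hlam S w (ξ ω)) k
  calc ∫ ω, (∑ k, (ridgeEst X lam S (fun i => (Xᵀ *ᵥ w) i + ξ ω i) k - w k) ^ 2) ∂μ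
      = ∑ k, ∫ ω, (ξ ω ⬝ᵥ C k - lam * b k) ^ 2 ∂μ := by
        simp_rw [herr]
        exact integral_finsetSum _ fun k _ => integrable_dotProduct_sub_sq hint hint2 _ _
    _ ≤ ∑ k, (σ ^ 2 * (C k ⬝ᵥ C k) + (lam * b k) ^ 2) := Finset.sum_le_sum fun k _ => by
        rw [integral_dotProduct_sub_sq hint hint2 hmean]
        gcongr
        exact hvar _
    _ = σ ^ 2 * (C * Cᵀ).trace + lam ^ 2 * (b ⬝ᵥ b) := by
        rw [trace_mul_transpose_eq_sum_dotProduct, Finset.sum_add_distrib, Finset.mul_sum,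
          dotProduct, Finset.mul_sum]
        exact congrArg _ (Finset.sum_congr rfl fun k _ => by ring)
    _ ≤ σ ^ 2 * ((regGram X lam S)⁻¹).trace := by
        simp only [C, b, regGram_eq]
        exact ridge_variance_add_bias_le _ w hlam (by simpa [dotProduct, sq] using hreg)
end

section
/- (Coupon collector lower bound) If a multiset S of size s ≤ d(ln(d) − 1) is drawn i.i.d. from any probability distribution over {1..n}, where each element of {1..n} is assigned one of d labels with n/d elements per label, then with probability at least 1/2 some label i ∈ {1..d} is never selected (i.e., s_i = 0). -/
/-!
Let `x j` be the probability that a single draw avoids label `j` and `X` the number of labels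
avoided by all `s` draws. Then `E X = ∑ j, x j ^ s`, which Jensen's inequality bounds below by
`d ((d - 1) / d) ^ s ≥ 1` when `s ≤ (d - 1) log d`. The events of avoiding two distinct labels
are negatively correlated, so `E X² ≤ (E X)² + E X`, and the second moment method gives
`P(X > 0) ≥ (E X)² / E X² ≥ E X / (1 + E X) ≥ 1 / 2`.
-/

open Finset

/-- The Chung–Erdős inequality, in the form of the second moment method. -/
theorem sq_sum_sum_le_sum_biUnion_mul_sum_sum_inter {Ω β : Type*} [DecidableEq Ω]
    (w : Ω → ℝ) (hw : ∀ x, 0 ≤ w x) (s : Finset β) (A : β → Finset Ω) :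
    (∑ j ∈ s, ∑ x ∈ A j, w x) ^ 2 ≤
      (∑ x ∈ s.biUnion A, w x) * ∑ j ∈ s, ∑ k ∈ s, ∑ x ∈ A j ∩ A k, w x := by
  set U := s.biUnion A
  set N : Ω → ℝ := fun x => ∑ j ∈ s, if x ∈ A j then 1 else 0
  have hsub : ∀ j ∈ s, ∀ B : Finset Ω, A j ∩ B ⊆ U := fun j hj B =>
    inter_subset_left.trans (subset_biUnion_of_mem A hj)
  have hfirst : ∑ j ∈ s, ∑ x ∈ A j, w x = ∑ x ∈ U, w x * N x := by
    simp only [N, mul_sum, mul_ite, mul_one, mul_zero]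
    rw [sum_comm]
    refine sum_congr rfl fun j hj => ?_
    rw [sum_ite_mem, inter_eq_right.mpr (subset_biUnion_of_mem A hj)]
  have hsecond : ∑ j ∈ s, ∑ k ∈ s, ∑ x ∈ A j ∩ A k, w x = ∑ x ∈ U, w x * N x ^ 2 := by
    have hpoint : ∀ x, w x * N x ^ 2 = ∑ j ∈ s, ∑ k ∈ s, if x ∈ A j ∩ A k then w x else 0 := by
      intro x
      rw [sq, sum_mul_sum, mul_sum]
      refine sum_congr rfl fun j _ => ?_
      rw [mul_sum]
      refine sum_congr rfl fun k _ => ?_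
      simp only [mem_inter, ite_and]
      split_ifs <;> simp
    simp only [hpoint]
    symm
    rw [sum_comm]
    refine sum_congr rfl fun j hj => ?_
    rw [sum_comm]
    refine sum_congr rfl fun k _ => ?_
    rw [sum_ite_mem, inter_eq_right.mpr (hsub j hj _)]
  rw [hfirst, hsecond]
  exact sum_sq_le_sum_mul_sum_of_sq_le_mul U (fun x _ => hw x)
    (fun x _ => mul_nonneg (hw x) (sq_nonneg _)) (fun x _ => le_of_eq (by ring))

theorem sum_piFinset_prod_eq_pow {ι α R : Type*} [Fintype ι] [DecidableEq ι] [CommSemiring R]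
    (B : Finset α) (p : α → R) :
    ∑ f ∈ Fintype.piFinset (fun _ : ι => B), ∏ t, p (f t) = (∑ i ∈ B, p i) ^ Fintype.card ι := by
  rw [sum_prod_piFinset, prod_const, card_univ]

theorem sum_sum_sum_piFinset_inter_le {ι α β : Type*} [Fintype ι] [DecidableEq ι] [DecidableEq α]
    [Fintype β] [DecidableEq β] (p : α → ℝ) (hp0 : ∀ i, 0 ≤ p i) (B : β → Finset α)
    (hB : ∀ j k, j ≠ k → ∑ i ∈ B j ∩ B k, p i ≤ (∑ i ∈ B j, p i) * ∑ i ∈ B k, p i) :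
    ∑ j, ∑ k, ∑ f ∈ Fintype.piFinset (fun _ : ι => B j) ∩ Fintype.piFinset (fun _ => B k),
        ∏ t, p (f t) ≤
      (∑ j, (∑ i ∈ B j, p i) ^ Fintype.card ι) ^ 2 + ∑ j, (∑ i ∈ B j, p i) ^ Fintype.card ι := by
  set P : β → ℝ := fun j => (∑ i ∈ B j, p i) ^ Fintype.card ι
  have hP0 : ∀ j, 0 ≤ P j := fun j => pow_nonneg (sum_nonneg fun i _ => hp0 i) _
  have hterm : ∀ j k, ∑ f ∈ Fintype.piFinset (fun _ : ι => B j) ∩ Fintype.piFinset (fun _ => B k),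
      ∏ t, p (f t) ≤ P j * P k + if j = k then P j else 0 := by
    intro j k
    rw [← Fintype.piFinset_inter, sum_piFinset_prod_eq_pow]
    by_cases hjk : j = k
    · subst hjk
      simp only [inter_self, if_true]
      exact le_add_of_nonneg_left (mul_nonneg (hP0 j) (hP0 j))
    · simp only [hjk, if_false, add_zero, P, ← mul_pow]
      exact pow_le_pow_left₀ (sum_nonneg fun i _ => hp0 i) (hB j k hjk) _
  calc _ ≤ ∑ j, ∑ k, (P j * P k + if j = k then P j else 0) :=
        sum_le_sum fun j _ => sum_le_sum fun k _ => hterm j k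
    _ = (∑ j, P j) ^ 2 + ∑ j, P j := by
        simp only [sum_add_distrib, sum_ite_eq, mem_univ, if_true, sq, sum_mul_sum]

section Labels

variable {α β : Type*} [Fintype α] [DecidableEq β] (lab : α → β) {p : α → ℝ}

theorem sum_filter_ne_eq_one_sub (hp1 : ∑ i, p i = 1) (j : β) :
    ∑ i with lab i ≠ j, p i = 1 - ∑ i with lab i = j, p i := by
  rw [← hp1, ← sum_filter_add_sum_filter_not univ (fun i => lab i = j)]
  ring

theorem sum_sum_filter_ne [Fintype β] (hp1 : ∑ i, p i = 1) :
    ∑ j, ∑ i with lab i ≠ j, p i = Fintype.card β - 1 := by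
  simp only [sum_filter_ne_eq_one_sub lab hp1, sum_sub_distrib, sum_fiberwise, hp1, sum_const,
    card_univ, nsmul_eq_mul, mul_one]

theorem sum_filter_ne_and_ne_le_mul (hp0 : ∀ i, 0 ≤ p i) (hp1 : ∑ i, p i = 1) {j k : β}
    (hjk : j ≠ k) :
    ∑ i with lab i ≠ j ∧ lab i ≠ k, p i ≤ (∑ i with lab i ≠ j, p i) * ∑ i with lab i ≠ k, p i := by
  have hsplit := sum_filter_add_sum_filter_not ({i | lab i ≠ j} : Finset α) (lab · ≠ k) p
  have hk : univ.filter (fun i => lab i ≠ j ∧ ¬lab i ≠ k) = univ.filter (fun i => lab i = k) :=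
    filter_congr fun i _ => by grind
  rw [filter_filter, filter_filter, hk] at hsplit
  rw [sum_filter_ne_eq_one_sub lab hp1] at hsplit ⊢
  rw [sum_filter_ne_eq_one_sub lab hp1]
  have ha : 0 ≤ ∑ i with lab i = j, p i := sum_nonneg fun i _ => hp0 i
  have hb : 0 ≤ ∑ i with lab i = k, p i := sum_nonneg fun i _ => hp0 i
  nlinarith [mul_nonneg ha hb]

end Labels

theorem one_le_mul_pow_of_le_mul_log {d : ℝ} (hd : 1 < d) {N : ℕ}
    (hN : (N : ℝ) ≤ (d - 1) * Real.log d) : 1 ≤ d * ((d - 1) / d) ^ N := by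
  have hd0 : 0 < d := by linarith
  have hd1 : 0 < d - 1 := by linarith
  have hlog_ratio : -(1 / (d - 1)) ≤ Real.log ((d - 1) / d) := by
    have h := Real.one_sub_inv_le_log_of_pos (div_pos hd1 hd0)
    rwa [inv_div, one_sub_div hd1.ne', show d - 1 - d = -1 by ring, neg_div] at h
  have hN' : (N : ℝ) / (d - 1) ≤ Real.log d := by rwa [div_le_iff₀' hd1]
  rw [← Real.log_nonneg_iff (by positivity), Real.log_mul hd0.ne' (by positivity), Real.log_pow]
  calc 0 ≤ Real.log d - N / (d - 1) := by linarith
    _ = Real.log d + N * -(1 / (d - 1)) := by ring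
    _ ≤ Real.log d + N * Real.log ((d - 1) / d) := by gcongr

theorem one_le_sum_pow_of_sum_eq_card_sub_one {β : Type*} [Fintype β] (x : β → ℝ)
    (hx0 : ∀ j, 0 ≤ x j) (hsum : ∑ j, x j = Fintype.card β - 1) (hcard : 2 ≤ Fintype.card β)
    {N : ℕ} (hN : (N : ℝ) ≤ (Fintype.card β - 1) * Real.log (Fintype.card β)) :
    1 ≤ ∑ j, x j ^ N := by
  set d : ℝ := (Fintype.card β : ℝ)
  have hd : 1 < d := by
    simp only [d]
    exact_mod_cast hcard
  have hjensen := (convexOn_pow N).map_sum_le (t := univ) (w := fun _ => 1 / d) (p := x)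
    (fun _ _ => by positivity) (by simp [d]; field_simp) (fun j _ => hx0 j)
  simp only [smul_eq_mul, ← mul_sum, hsum] at hjensen
  calc 1 ≤ d * ((d - 1) / d) ^ N := one_le_mul_pow_of_le_mul_log hd hN
    _ = d * (1 / d * (d - 1)) ^ N := by ring
    _ ≤ d * (1 / d * ∑ j, x j ^ N) := by gcongr
    _ = ∑ j, x j ^ N := by field_simp

open scoped Classical

theorem coupon_collector_lower_bound_general
    (n d s : ℕ) (hd : 2 ≤ d)
    (lab : Fin n → Fin d)
    (p : Fin n → ℝ) (hp0 : ∀ i, 0 ≤ p i) (hp1 : ∑ i, p i = 1)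
    (hs : (s : ℝ) ≤ (d : ℝ) * (Real.log d - 1)) :
    (1 : ℝ) / 2 ≤
      ∑ f ∈ Finset.univ.filter
          (fun f : Fin s → Fin n => ∃ j : Fin d, ∀ t, lab (f t) ≠ j),
        ∏ t, p (f t) := by
  set w : (Fin s → Fin n) → ℝ := fun f => ∏ t, p (f t)
  set B : Fin d → Finset (Fin n) := fun j => {i | lab i ≠ j}
  set A : Fin d → Finset (Fin s → Fin n) := fun j => Fintype.piFinset fun _ => B j
  set m := ∑ j, (∑ i ∈ B j, p i) ^ s
  have hevent :
      univ.filter (fun f : Fin s → Fin n => ∃ j, ∀ t, lab (f t) ≠ j) = univ.biUnion A := by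
    ext f
    simp [A, B]
  have hfirst : ∑ j, ∑ f ∈ A j, w f = m :=
    sum_congr rfl fun j _ => by
      simpa only [Fintype.card_fin] using sum_piFinset_prod_eq_pow (ι := Fin s) (B j) p
  have hsecond : ∑ j, ∑ k, ∑ f ∈ A j ∩ A k, w f ≤ m ^ 2 + m := by
    have hcorr : ∀ j k, j ≠ k → ∑ i ∈ B j ∩ B k, p i ≤ (∑ i ∈ B j, p i) * ∑ i ∈ B k, p i :=
      fun j k hjk => by simpa [B, filter_and] using sum_filter_ne_and_ne_le_mul lab hp0 hp1 hjk
    simpa only [Fintype.card_fin] using sum_sum_sum_piFinset_inter_le (ι := Fin s) p hp0 B hcorr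
  have hm : 1 ≤ m := by
    refine one_le_sum_pow_of_sum_eq_card_sub_one _ (fun j => sum_nonneg fun i _ => hp0 i)
      (by simpa using sum_sum_filter_ne lab hp1) (by simpa using hd) ?_
    have hlog := Real.log_le_sub_one_of_pos (x := d) (by positivity)
    simp only [Fintype.card_fin]
    nlinarith
  have hw : ∀ f, 0 ≤ w f := fun f => prod_nonneg fun t _ => hp0 _
  have hchung_erdos := sq_sum_sum_le_sum_biUnion_mul_sum_sum_inter w hw univ A
  rw [hfirst] at hchung_erdos
  rw [hevent]
  have hP : 0 ≤ ∑ f ∈ univ.biUnion A, w f := sum_nonneg fun f _ => hw f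
  nlinarith [mul_le_mul_of_nonneg_left hsecond hP]

/-- Coupon collector lower bound: if a multiset of `s ≤ d(ln d − 1)` indices is drawn
i.i.d. from any distribution `p` over `{1..n}`, where each index carries one of `d` labels
with `n/d` indices per label, then with probability at least `1/2` some label is never
selected. -/
theorem coupon_collector_lower_bound
    (n d s : ℕ) (hd : 2 ≤ d) (hdn : d ∣ n)
    (lab : Fin n → Fin d)
    (hfib : ∀ j : Fin d, (Finset.univ.filter (fun i => lab i = j)).card = n / d)
    (p : Fin n → ℝ) (hp0 : ∀ i, 0 ≤ p i) (hp1 : ∑ i, p i = 1)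
    (hs : (s : ℝ) ≤ (d : ℝ) * (Real.log d - 1)) :
    (1 : ℝ) / 2 ≤
      ∑ f ∈ Finset.univ.filter
          (fun f : Fin s → Fin n => ∃ j : Fin d, ∀ t, lab (f t) ≠ j),
        ∏ t, p (f t) :=
  coupon_collector_lower_bound_general n d s hd lab p hp0 hp1 hs
end

section
/- Let R̂_t ~ Geometric((t−d)/t), independent, for t = 2d,...,n. Then for any δ ∈ (0,1), with probability at least 1 − δ, Σ_{t=2d}^n R̂_t = O(n + log(n/d)·log(1/δ)); concretely, with probability ≥ 1−δ the sum is at most 8·log(n/d)·log(1/δ) + 12n. -/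
/-!
Every `d / t` with `t ≥ 2d` is at most `1/2`, so at `λ = log (11/10)` each trial count has
moment generating function at most `(11/10) / (2 - 11/10) = 11/9 ≤ e^{12λ}`. Chernoff's bound for
the independent sum then gives `P(∑ R̂_t ≥ 12 n + x) ≤ e^{-λx}`, and `x = 8 J log₂(1/δ)` makes
this at most `δ` because `(11/10)^8 ≥ 2`.
-/

open MeasureTheory ProbabilityTheory Real Finset
open scoped ENNReal

namespace ProbabilityTheory

variable {Ω : Type*} [MeasurableSpace Ω] {μ : Measure Ω}

lemma lintegral_comp_eq_tsum_of_nat {X : Ω → ℕ} (hX : Measurable X) (f : ℕ → ℝ≥0∞) :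
    ∫⁻ ω, f (X ω) ∂μ = ∑' k, f k * μ {ω | X ω = k} := by
  rw [← lintegral_map (measurable_of_countable f) hX, lintegral_countable']
  simp_rw [Measure.map_apply hX (measurableSet_singleton _)]
  rfl

def HasGeometricLaw (X : Ω → ℕ) (q : ℝ) (μ : Measure Ω) : Prop :=
  ∀ k : ℕ, μ {ω | X ω = k + 1} = ENNReal.ofReal (q ^ k * (1 - q))

lemma hasGeometricLaw_div {X : Ω → ℕ} {a b : ℝ} (hb : b ≠ 0)
    (h : ∀ k : ℕ, μ {ω | X ω = k + 1} = ENNReal.ofReal ((a / b) ^ k * ((b - a) / b))) :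
    HasGeometricLaw X (a / b) μ := by
  intro k
  rw [h k, one_sub_div hb]

namespace HasGeometricLaw

variable [IsProbabilityMeasure μ] {X : Ω → ℕ} {q : ℝ}

lemma measure_setOf_eq_zero (h : HasGeometricLaw X q μ) (hX : Measurable X) (hq0 : 0 ≤ q)
    (hq1 : q < 1) : μ {ω | X ω = 0} = 0 := by
  have htotal := lintegral_comp_eq_tsum_of_nat (μ := μ) hX 1
  have hmass : ∑' k : ℕ, μ {ω | X ω = k + 1} = 1 := by
    rw [tsum_congr h]
    simp_rw [ENNReal.ofReal_mul (pow_nonneg hq0 _), ENNReal.ofReal_pow hq0,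
      ENNReal.tsum_mul_right, ENNReal.tsum_geometric, ← ENNReal.ofReal_one,
      ← ENNReal.ofReal_sub _ hq0]
    rw [ENNReal.ofReal_one]
    exact ENNReal.inv_mul_cancel (ENNReal.ofReal_pos.2 (sub_pos.2 hq1)).ne' ENNReal.ofReal_ne_top
  rw [tsum_eq_zero_add' ENNReal.summable] at htotal
  simp only [Pi.one_apply, one_mul, lintegral_const, measure_univ, hmass] at htotal
  nth_rw 1 [← zero_add 1] at htotal
  exact ((ENNReal.add_left_inj ENNReal.one_ne_top).1 htotal).symm

lemma lintegral_exp_mul (h : HasGeometricLaw X q μ) (hX : Measurable X) (hq0 : 0 ≤ q)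
    (hq1 : q < 1) {t : ℝ} (ht : exp t * q < 1) :
    ∫⁻ ω, ENNReal.ofReal (exp (t * X ω)) ∂μ =
      ENNReal.ofReal (exp t * (1 - q) / (1 - exp t * q)) := by
  set c := exp t
  have hcq : 0 ≤ c * q := mul_nonneg (exp_pos t).le hq0
  have hterm (k : ℕ) : ENNReal.ofReal (exp (t * (k + 1 : ℕ))) * μ {ω | X ω = k + 1} =
      ENNReal.ofReal (c * (1 - q) * (c * q) ^ k) := by
    rw [h, ← ENNReal.ofReal_mul (exp_pos _).le, mul_comm t, exp_nat_mul]
    congr 1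
    ring
  have hterm_nonneg (k : ℕ) : 0 ≤ c * (1 - q) * (c * q) ^ k := by
    have := sub_nonneg.2 hq1.le
    positivity
  rw [lintegral_comp_eq_tsum_of_nat hX (fun k ↦ ENNReal.ofReal (exp (t * k))),
    tsum_eq_zero_add' ENNReal.summable, h.measure_setOf_eq_zero hX hq0 hq1, mul_zero, zero_add]
  simp_rw [hterm]
  rw [← ENNReal.ofReal_tsum_of_nonneg hterm_nonneg
    ((summable_geometric_of_lt_one hcq ht).mul_left _), tsum_mul_left,
    tsum_geometric_of_lt_one hcq ht, div_eq_mul_inv]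

lemma integrable_exp_mul (h : HasGeometricLaw X q μ) (hX : Measurable X) (hq0 : 0 ≤ q)
    (hq1 : q < 1) {t : ℝ} (ht : exp t * q < 1) :
    Integrable (fun ω ↦ exp (t * X ω)) μ := by
  refine ⟨by fun_prop, ?_⟩
  rw [hasFiniteIntegral_iff_ofReal (.of_forall fun ω ↦ (exp_pos _).le),
    h.lintegral_exp_mul hX hq0 hq1 ht]
  exact ENNReal.ofReal_lt_top

lemma mgf_eq (h : HasGeometricLaw X q μ) (hX : Measurable X) (hq0 : 0 ≤ q) (hq1 : q < 1)
    {t : ℝ} (ht : exp t * q < 1) :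
    mgf (fun ω ↦ (X ω : ℝ)) μ t = exp t * (1 - q) / (1 - exp t * q) := by
  rw [mgf, integral_eq_lintegral_of_nonneg_ae (.of_forall fun ω ↦ (exp_pos _).le) (by fun_prop),
    h.lintegral_exp_mul hX hq0 hq1 ht, ENNReal.toReal_ofReal]
  have := sub_pos.2 ht
  have := sub_nonneg.2 hq1.le
  positivity

lemma integrable_exp_mul_of_le_half (h : HasGeometricLaw X q μ) (hX : Measurable X)
    (hq0 : 0 ≤ q) (hq : q ≤ 1 / 2) {t : ℝ} (ht : exp t < 2) :
    Integrable (fun ω ↦ exp (t * X ω)) μ :=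
  h.integrable_exp_mul hX hq0 (by linarith) (by nlinarith [exp_pos t])

lemma mgf_le_of_le_half (h : HasGeometricLaw X q μ) (hX : Measurable X) (hq0 : 0 ≤ q)
    (hq : q ≤ 1 / 2) {t : ℝ} (ht0 : 0 ≤ t) (ht : exp t < 2) :
    mgf (fun ω ↦ (X ω : ℝ)) μ t ≤ exp t / (2 - exp t) := by
  have hc1 : 1 ≤ exp t := one_le_exp ht0
  have hcq : exp t * q < 1 := by nlinarith
  rw [h.mgf_eq hX hq0 (by linarith) hcq, div_le_div_iff₀ (by linarith) (by linarith)]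
  nlinarith [mul_nonneg (sub_nonneg.2 hc1) (by linarith : 0 ≤ 1 - 2 * q)]

lemma mgf_log_le_exp_mul_twelve (h : HasGeometricLaw X q μ) (hX : Measurable X) (hq0 : 0 ≤ q)
    (hq : q ≤ 1 / 2) :
    mgf (fun ω ↦ (X ω : ℝ)) μ (log (11 / 10)) ≤ exp (log (11 / 10) * 12) := by
  have hexp : exp (log (11 / 10)) = 11 / 10 := exp_log (by norm_num)
  calc _ ≤ exp (log (11 / 10)) / (2 - exp (log (11 / 10))) :=
        h.mgf_le_of_le_half hX hq0 hq (log_nonneg (by norm_num)) (by rw [hexp]; norm_num)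
    _ ≤ exp (log (11 / 10)) ^ 12 := by rw [hexp]; norm_num
    _ = exp (log (11 / 10) * 12) := by rw [← exp_nat_mul, mul_comm]; norm_num

end HasGeometricLaw

variable [IsProbabilityMeasure μ]

lemma measureReal_sum_ge_le_of_mgf_le {ι : Type*} {Y : ι → Ω → ℝ} (hindep : iIndepFun Y μ)
    (hmeas : ∀ i, Measurable (Y i)) {s : Finset ι} {t a x : ℝ} (ht : 0 ≤ t)
    (hint : ∀ i ∈ s, Integrable (fun ω ↦ exp (t * Y i ω)) μ)
    (hmgf : ∀ i ∈ s, mgf (Y i) μ t ≤ exp (t * a)) :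
    μ.real {ω | a * #s + x ≤ ∑ i ∈ s, Y i ω} ≤ exp (-t * x) := by
  have hprod : ∏ i ∈ s, mgf (Y i) μ t ≤ exp (t * (a * #s)) := by
    rw [show t * (a * #s) = #s * (t * a) by ring, exp_nat_mul, ← prod_const]
    exact prod_le_prod (fun i _ ↦ mgf_nonneg) hmgf
  have hchernoff :=
    measure_ge_le_exp_mul_mgf (a * #s + x) ht (hindep.integrable_exp_mul_sum hmeas hint)
  rw [hindep.mgf_sum hmeas] at hchernoff
  simp only [Finset.sum_apply] at hchernoff
  calc _ ≤ _ := hchernoff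
    _ ≤ exp (-t * (a * #s + x)) * exp (t * (a * #s)) := by gcongr
    _ = exp (-t * x) := by rw [← exp_add]; ring_nf

lemma ofReal_one_sub_le_measure_le_of_measureReal_ge_le {f : Ω → ℝ} (hf : Measurable f)
    {b b' δ : ℝ} (h : μ.real {ω | b ≤ f ω} ≤ δ) (hb : b ≤ b') :
    ENNReal.ofReal (1 - δ) ≤ μ {ω | f ω ≤ b'} := by
  have hlt : μ.real {ω | f ω < b} = 1 - μ.real {ω | b ≤ f ω} := by
    simp_rw [← not_le]
    exact probReal_compl_eq_one_sub (measurableSet_le measurable_const hf)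
  calc ENNReal.ofReal (1 - δ) ≤ ENNReal.ofReal (μ.real {ω | f ω < b}) := by
        gcongr; linarith
    _ = μ {ω | f ω < b} := ofReal_measureReal
    _ ≤ μ {ω | f ω ≤ b'} := measure_mono fun ω (hω : f ω < b) ↦ (hω.le.trans hb : f ω ≤ b')

end ProbabilityTheory

lemma Real.exp_neg_mul_logb_one_div_le {a δ : ℝ} (ha : log 2 ≤ a) (hδ0 : 0 < δ) (hδ1 : δ ≤ 1) :
    exp (-(a * logb 2 (1 / δ))) ≤ δ := by
  have hlogb : log 2 * logb 2 (1 / δ) = -log δ := by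
    rw [logb, one_div, log_inv]; field_simp
  have hlogb0 : 0 ≤ logb 2 (1 / δ) := logb_nonneg one_lt_two (one_le_one_div hδ0 hδ1)
  calc exp (-(a * logb 2 (1 / δ))) ≤ exp (log δ) := by gcongr; nlinarith
    _ = δ := exp_log hδ0

lemma Real.log_two_le_eight_mul_log : log 2 ≤ 8 * log (11 / 10) :=
  calc log 2 ≤ log ((11 / 10) ^ 8) := log_le_log two_pos (by norm_num)
    _ = 8 * log (11 / 10) := by rw [log_pow]; norm_num

/-- High-probability bound on the total number of rejection-sampling trials: for
independent `R̂_t ~ Geometric((t−d)/t)` on `{1,2,...}`, `t = 2d,...,n`, with `n/d = 2^J`,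
and any `δ ∈ (0,1)`, with probability at least `1 − δ`,
`∑_{t=2d}^n R̂_t ≤ 8·log₂(n/d)·log₂(1/δ) + 12n = O(n + log(n/d)·log(1/δ))`. -/
theorem rejection_trials_high_probability_bound
    (d n J : ℕ) (hd : 1 ≤ d) (hJ : 1 ≤ J) (hn : n = d * 2 ^ J)
    (δ : ℝ) (hδ0 : 0 < δ) (hδ1 : δ < 1)
    {Ω : Type} [MeasurableSpace Ω] (μ : Measure Ω) [IsProbabilityMeasure μ]
    (R : ℕ → Ω → ℕ) (hmeas : ∀ t, Measurable (R t))
    (hgeom : ∀ t ∈ Finset.Icc (2 * d) n, ∀ k : ℕ,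
      μ {ω | R t ω = k + 1} = ENNReal.ofReal (((d : ℝ) / t) ^ k * (((t : ℝ) - d) / t)))
    (hindep : iIndepFun R μ) :
    ENNReal.ofReal (1 - δ) ≤
      μ {ω | ∑ t ∈ Finset.Icc (2 * d) n, (R t ω : ℝ)
          ≤ 8 * Real.logb 2 ((n : ℝ) / d) * Real.logb 2 (1 / δ) + 12 * n} := by
  set s := Finset.Icc (2 * d) n
  set lam : ℝ := log (11 / 10)
  have hlam0 : 0 ≤ lam := log_nonneg (by norm_num)
  have htpos (t) (ht : t ∈ s) : (0 : ℝ) < t := by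
    have : 2 * d ≤ t := (Finset.mem_Icc.1 ht).1
    exact_mod_cast (by omega : 0 < t)
  have hq (t) (ht : t ∈ s) : (d / t : ℝ) ≤ 1 / 2 := by
    have h2d : (2 * d : ℝ) ≤ t := by exact_mod_cast (Finset.mem_Icc.1 ht).1
    rw [div_le_iff₀ (htpos t ht)]
    linarith
  have hlaw (t) (ht : t ∈ s) : HasGeometricLaw (R t) (d / t) μ :=
    hasGeometricLaw_div (htpos t ht).ne' (hgeom t ht)
  have hYindep : iIndepFun (fun t ω ↦ (R t ω : ℝ)) μ := hindep.comp _ fun _ ↦ measurable_from_top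
  have htail := measureReal_sum_ge_le_of_mgf_le hYindep (fun t ↦ by fun_prop) hlam0
    (fun t ht ↦ (hlaw t ht).integrable_exp_mul_of_le_half (hmeas t) (by positivity) (hq t ht)
      (by rw [exp_log (by norm_num)]; norm_num))
    (fun t ht ↦ (hlaw t ht).mgf_log_le_exp_mul_twelve (hmeas t) (by positivity) (hq t ht))
    (x := 8 * J * logb 2 (1 / δ))
  have hexp_tail : exp (-lam * (8 * J * logb 2 (1 / δ))) ≤ δ := by
    rw [neg_mul, ← mul_assoc, ← mul_assoc]
    refine exp_neg_mul_logb_one_div_le ?_ hδ0 hδ1.le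
    have hlam : log 2 ≤ 8 * lam := log_two_le_eight_mul_log
    nlinarith [mul_nonneg hlam0 (sub_nonneg.2 (Nat.one_le_cast.2 hJ : (1 : ℝ) ≤ J))]
  refine ofReal_one_sub_le_measure_le_of_measureReal_ge_le (by fun_prop)
    (htail.trans hexp_tail) ?_
  have hlogb : logb 2 ((n : ℝ) / d) = J := by
    rw [hn, Nat.cast_mul, mul_div_cancel_left₀ _ (by positivity : (d : ℝ) ≠ 0),
      Nat.cast_pow, Nat.cast_ofNat, logb_pow, logb_self_eq_one one_lt_two, mul_one]
  have hcard : (#s : ℝ) ≤ n := by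
    simp only [s, Nat.card_Icc]
    exact_mod_cast (by omega : n + 1 - 2 * d ≤ n)
  rw [hlogb]
  linarith
end
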